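/- arXiv:cs/0604005 — 3 statements merged into one kernel-verified Lean document; each statement's English description precedes it below -/
import Mathlib

section
/- Let p and π be probability mass functions on A×B with ||p - π||₁ < 2ε, and let b ∈ B satisfy p_B(b) > 0 and π_B(b) > 0. Then the L1 distance between the conditional distributions p(·|b) and π(·|b) on A is at most 4ε / π_B(b). -/
/-!
Write `P = ∑ f` and `G = ∑ g` for the masses of the fibre over `b`. Then
`f / P - g / G = (f - g) / G + (f / P) * (G - P) / G`, and since `f / P` sums to `1`,
the L1 distance of the normalisations is at most `(‖f - g‖₁ + |G - P|) / G ≤ 2 ‖f - g‖₁ / G`.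
Restricting to one fibre does not increase the L1 distance, so `‖f - g‖₁ < 2ε`.
-/

open Finset

theorem Finset.abs_sum_sub_sum_le_sum_abs_sub {ι : Type*} (s : Finset ι) (f g : ι → ℝ) :
    |∑ i ∈ s, f i - ∑ i ∈ s, g i| ≤ ∑ i ∈ s, |f i - g i| := by
  rw [← sum_sub_distrib]
  exact abs_sum_le_sum_abs _ _

theorem Fintype.sum_fiber_le_sum_of_nonneg {A B M : Type*} [Fintype A] [Fintype B]
    [AddCommMonoid M] [PartialOrder M] [IsOrderedAddMonoid M]
    {F : A × B → M} (hF : ∀ x, 0 ≤ F x) (b : B) :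
    ∑ a, F (a, b) ≤ ∑ x, F x := by
  rw [Fintype.sum_prod_type]
  exact sum_le_sum fun a _ => single_le_sum (f := fun b' => F (a, b')) (fun _ _ => hF _)
    (mem_univ b)

theorem sum_abs_div_sum_sub_div_sum_le {ι : Type*} [Fintype ι] {f g : ι → ℝ}
    (hf : ∀ i, 0 ≤ f i) (hfs : 0 < ∑ i, f i) (hgs : 0 < ∑ i, g i) :
    ∑ i, |f i / ∑ j, f j - g i / ∑ j, g j| ≤ 2 * (∑ i, |f i - g i|) / ∑ j, g j := by
  set P := ∑ j, f j
  set G := ∑ j, g j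
  have hsplit : ∀ i, f i / P - g i / G = (f i - g i) / G + f i / P * ((G - P) / G) := by
    intro i
    field_simp
    ring
  have hnormalized : ∑ i, f i / P = 1 := by rw [← sum_div, div_self hfs.ne']
  have hmass : |G - P| ≤ ∑ i, |f i - g i| := by
    rw [abs_sub_comm]
    exact abs_sum_sub_sum_le_sum_abs_sub univ f g
  calc ∑ i, |f i / P - g i / G|
      ≤ ∑ i, (|f i - g i| / G + f i / P * (|G - P| / G)) := by
        gcongr with i
        calc |f i / P - g i / G| = |(f i - g i) / G + f i / P * ((G - P) / G)| := by
              rw [hsplit]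
          _ ≤ |(f i - g i) / G| + |f i / P * ((G - P) / G)| := abs_add_le _ _
          _ = |f i - g i| / G + f i / P * (|G - P| / G) := by
              rw [abs_mul, abs_div, abs_div, abs_div, abs_of_pos hgs, abs_of_nonneg (hf i),
                abs_of_pos hfs]
    _ = ((∑ i, |f i - g i|) + |G - P|) / G := by
        rw [sum_add_distrib, ← sum_div, ← sum_mul, hnormalized, one_mul, add_div]
    _ ≤ 2 * (∑ i, |f i - g i|) / G := by
        gcongr
        linarith

theorem conditional_L1_bound_general
    {A B : Type*} [Fintype A] [Fintype B]
    {ε : ℝ}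
    (p π : A × B → ℝ)
    (hp0 : ∀ a, 0 ≤ p a)
    (h : ∑ x : A × B, |p x - π x| < 2 * ε)
    (b : B)
    (hpb : 0 < ∑ a : A, p (a, b))
    (hπb : 0 < ∑ a : A, π (a, b)) :
    ∑ a : A, |p (a, b) / (∑ a' : A, p (a', b)) - π (a, b) / (∑ a' : A, π (a', b))|
      ≤ 4 * ε / (∑ a' : A, π (a', b)) := by
  have hfiber : ∑ a, |p (a, b) - π (a, b)| ≤ 2 * ε :=
    calc _ ≤ ∑ x, |p x - π x| :=
          Fintype.sum_fiber_le_sum_of_nonneg (F := fun x => |p x - π x|) (fun _ => abs_nonneg _) b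
      _ ≤ 2 * ε := h.le
  calc _ ≤ 2 * (∑ a, |p (a, b) - π (a, b)|) / ∑ a', π (a', b) :=
        sum_abs_div_sum_sub_div_sum_le (fun a => hp0 (a, b)) hpb hπb
    _ ≤ 4 * ε / ∑ a', π (a', b) := by gcongr ?_ / _; linarith

/-- If `‖p - π‖₁ < 2ε` and `b` has positive marginal mass under both `p` and `π`,
then the conditional distributions on `A` given `b` satisfy
`‖p(·|b) - π(·|b)‖₁ ≤ 4ε / π_B(b)`. -/
theorem conditional_L1_bound
    {A B : Type*} [Fintype A] [Fintype B] [Nonempty A] [Nonempty B]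
    {ε : ℝ} (hε : 0 < ε)
    (p π : A × B → ℝ)
    (hp0 : ∀ a, 0 ≤ p a) (hp1 : ∑ a, p a = 1)
    (hπ0 : ∀ a, 0 ≤ π a) (hπ1 : ∑ a, π a = 1)
    (h : ∑ x : A × B, |p x - π x| < 2 * ε)
    (b : B)
    (hpb : 0 < ∑ a : A, p (a, b))
    (hπb : 0 < ∑ a : A, π (a, b)) :
    ∑ a : A, |p (a, b) / (∑ a' : A, p (a', b)) - π (a, b) / (∑ a' : A, π (a', b))|
      ≤ 4 * ε / (∑ a' : A, π (a', b)) :=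
  conditional_L1_bound_general p π hp0 h b hpb hπb
end

section
/- Let p be a probability distribution on X×Y×U×V (all alphabets finite) that admits both factorizations p(x,y,u,v) = p(u,v)·p(x|u,v)·p(y|u,v) (i.e., X − (U,V) − Y is a Markov chain) and p(x,y,u,v) = p(x,y)·p(u|x)·p(v|y) (i.e., U − X − Y − V is a Markov chain), with all relevant conditional probabilities well-defined. Then for every (x,y,u,v) with p(x,y,u,v) ≠ 0, it holds that p_{XV}(x,v)·p_{YU}(y,u) = p_{XY}(x,y)·p_{UV}(u,v). -/
section

variable {X Y U V : Type*} [Fintype X] [Fintype Y] [Fintype U] [Fintype V]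

/-- Marginal of `p` on `X`. -/
def margX (p : X × Y × U × V → ℝ) (x : X) : ℝ := ∑ y, ∑ u, ∑ v, p (x, y, u, v)
/-- Marginal of `p` on `Y`. -/
def margY (p : X × Y × U × V → ℝ) (y : Y) : ℝ := ∑ x, ∑ u, ∑ v, p (x, y, u, v)
/-- Marginal of `p` on `X × Y`. -/
def margXY (p : X × Y × U × V → ℝ) (x : X) (y : Y) : ℝ := ∑ u, ∑ v, p (x, y, u, v)
/-- Marginal of `p` on `U × V`. -/
def margUV (p : X × Y × U × V → ℝ) (u : U) (v : V) : ℝ := ∑ x, ∑ y, p (x, y, u, v)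
/-- Marginal of `p` on `X × U`. -/
def margXU (p : X × Y × U × V → ℝ) (x : X) (u : U) : ℝ := ∑ y, ∑ v, p (x, y, u, v)
/-- Marginal of `p` on `Y × V`. -/
def margYV (p : X × Y × U × V → ℝ) (y : Y) (v : V) : ℝ := ∑ x, ∑ u, p (x, y, u, v)
/-- Marginal of `p` on `X × V`. -/
def margXV (p : X × Y × U × V → ℝ) (x : X) (v : V) : ℝ := ∑ y, ∑ u, p (x, y, u, v)
/-- Marginal of `p` on `Y × U`. -/
def margYU (p : X × Y × U × V → ℝ) (y : Y) (u : U) : ℝ := ∑ x, ∑ v, p (x, y, u, v)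
/-- Marginal of `p` on `X × U × V`. -/
def margXUV (p : X × Y × U × V → ℝ) (x : X) (u : U) (v : V) : ℝ := ∑ y, p (x, y, u, v)
/-- Marginal of `p` on `Y × U × V`. -/
def margYUV (p : X × Y × U × V → ℝ) (y : Y) (u : U) (v : V) : ℝ := ∑ x, p (x, y, u, v)
/-- Marginal of `p` on `X × Y × U`. -/
def margXYU (p : X × Y × U × V → ℝ) (x : X) (y : Y) (u : U) : ℝ := ∑ v, p (x, y, u, v)
/-- Marginal of `p` on `X × Y × V`. -/
def margXYV (p : X × Y × U × V → ℝ) (x : X) (y : Y) (v : V) : ℝ := ∑ u, p (x, y, u, v)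

/-- if `p` admits both factorizations
`p(x,y,u,v) = p(u,v) p(x|u,v) p(y|u,v)` (Markov chain `X − (U,V) − Y`) and
`p(x,y,u,v) = p(x,y) p(u|x) p(v|y)` (Markov chain `U − X − Y − V`, including
`p(u|x,y) = p(u|x)` and `p(v|x,y) = p(v|y)`), then wherever `p(x,y,u,v) ≠ 0` we have
`p_{XV}(x,v) p_{YU}(y,u) = p_{XY}(x,y) p_{UV}(u,v)`. -/
theorem double_factorization_identity
    (p : X × Y × U × V → ℝ)
    (hp0 : ∀ a, 0 ≤ p a) (hp1 : ∑ a, p a = 1)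
    (h1 : ∀ x y u v, 0 < margUV p u v →
      p (x, y, u, v) = margUV p u v * (margXUV p x u v / margUV p u v) *
        (margYUV p y u v / margUV p u v))
    (h2 : ∀ x y u v, 0 < margXY p x y → 0 < margX p x → 0 < margY p y →
      p (x, y, u, v) = margXY p x y * (margXU p x u / margX p x) *
        (margYV p y v / margY p y))
    (h3 : ∀ x y u, 0 < margXY p x y → 0 < margX p x →
      margXYU p x y u / margXY p x y = margXU p x u / margX p x)
    (h4 : ∀ x y v, 0 < margXY p x y → 0 < margY p y →
      margXYV p x y v / margXY p x y = margYV p y v / margY p y) :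
    ∀ x y u v, p (x, y, u, v) ≠ 0 →
      margXV p x v * margYU p y u = margXY p x y * margUV p u v := by
  classical
  intro x y u v hpne
  -- nonnegativity of marginals
  have hXYnn : ∀ a b, 0 ≤ margXY p a b := fun a b =>
    Finset.sum_nonneg fun _ _ => Finset.sum_nonneg fun _ _ => hp0 _
  have hXYVnn : ∀ a b d, 0 ≤ margXYV p a b d := fun a b d =>
    Finset.sum_nonneg fun _ _ => hp0 _
  have hXYUnn : ∀ a b c, 0 ≤ margXYU p a b c := fun a b c =>
    Finset.sum_nonneg fun _ _ => hp0 _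
  have hXY_V : ∀ a b, margXY p a b = ∑ d, margXYV p a b d := fun a b => Finset.sum_comm
  have hXY_U : ∀ a b, margXY p a b = ∑ c, margXYU p a b c := fun a b => rfl
  have hXY_le_X : ∀ a b, margXY p a b ≤ margX p a := fun a b =>
    Finset.single_le_sum (f := fun i => margXY p a i) (fun i _ => hXYnn a i) (Finset.mem_univ b)
  have hXY_le_Y : ∀ a b, margXY p a b ≤ margY p b := fun a b =>
    Finset.single_le_sum (f := fun i => margXY p i b) (fun i _ => hXYnn i b) (Finset.mem_univ a)
  -- termwise consequence of h4
  have t4 : ∀ a b d, margXYV p a b d = margXY p a b * (margYV p b d / margY p b) := by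
    intro a b d
    by_cases hab : 0 < margXY p a b
    · have hb : 0 < margY p b := lt_of_lt_of_le hab (hXY_le_Y a b)
      have h := h4 a b d hab hb
      rw [div_eq_div_iff (ne_of_gt hab) (ne_of_gt hb)] at h
      field_simp
      linear_combination h
    · have hab0 : margXY p a b = 0 := le_antisymm (not_lt.mp hab) (hXYnn a b)
      have hle : margXYV p a b d ≤ margXY p a b := by
        rw [hXY_V]
        exact Finset.single_le_sum (fun i _ => hXYVnn a b i) (Finset.mem_univ d)
      have h0 : margXYV p a b d = 0 := le_antisymm (hab0 ▸ hle) (hXYVnn a b d)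
      rw [h0, hab0]; ring
  -- termwise consequence of h3
  have t3 : ∀ a b c, margXYU p a b c = margXY p a b * (margXU p a c / margX p a) := by
    intro a b c
    by_cases hab : 0 < margXY p a b
    · have ha : 0 < margX p a := lt_of_lt_of_le hab (hXY_le_X a b)
      have h := h3 a b c hab ha
      rw [div_eq_div_iff (ne_of_gt hab) (ne_of_gt ha)] at h
      field_simp
      linear_combination h
    · have hab0 : margXY p a b = 0 := le_antisymm (not_lt.mp hab) (hXYnn a b)
      have hle : margXYU p a b c ≤ margXY p a b := by
        rw [hXY_U]
        exact Finset.single_le_sum (fun i _ => hXYUnn a b i) (Finset.mem_univ c)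
      have h0 : margXYU p a b c = 0 := le_antisymm (hab0 ▸ hle) (hXYUnn a b c)
      rw [h0, hab0]; ring
  -- termwise consequence of h2
  have t2 : ∀ a b c d, p (a, b, c, d) =
      margXY p a b * (margXU p a c / margX p a) * (margYV p b d / margY p b) := by
    intro a b c d
    by_cases hab : 0 < margXY p a b
    · exact h2 a b c d hab (lt_of_lt_of_le hab (hXY_le_X a b))
        (lt_of_lt_of_le hab (hXY_le_Y a b))
    · have hab0 : margXY p a b = 0 := le_antisymm (not_lt.mp hab) (hXYnn a b)
      have hle1 : p (a, b, c, d) ≤ margXYU p a b c :=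
        Finset.single_le_sum (f := fun i => p (a, b, c, i)) (fun i _ => hp0 _) (Finset.mem_univ d)
      have hle2 : margXYU p a b c ≤ margXY p a b := by
        rw [hXY_U]
        exact Finset.single_le_sum (fun i _ => hXYUnn a b i) (Finset.mem_univ c)
      have h0 : p (a, b, c, d) = 0 :=
        le_antisymm (hab0 ▸ (hle1.trans hle2)) (hp0 _)
      rw [h0, hab0]; ring
  -- marginal sums
  have hXV : margXV p x v = ∑ b, margXY p x b * (margYV p b v / margY p b) :=
    Finset.sum_congr rfl fun b _ => t4 x b v
  have hYU : margYU p y u = ∑ a, margXY p a y * (margXU p a u / margX p a) :=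
    Finset.sum_congr rfl fun a _ => t3 a y u
  have hXUV : margXUV p x u v = (margXU p x u / margX p x) * margXV p x v := by
    have : margXUV p x u v =
        ∑ b, margXY p x b * (margXU p x u / margX p x) * (margYV p b v / margY p b) :=
      Finset.sum_congr rfl fun b _ => t2 x b u v
    rw [this, hXV, Finset.mul_sum]
    exact Finset.sum_congr rfl fun b _ => by ring
  have hYUV : margYUV p y u v = (margYV p y v / margY p y) * margYU p y u := by
    have : margYUV p y u v =
        ∑ a, margXY p a y * (margXU p a u / margX p a) * (margYV p y v / margY p y) :=
      Finset.sum_congr rfl fun a _ => t2 a y u v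
    rw [this, hYU, Finset.mul_sum]
    exact Finset.sum_congr rfl fun a _ => by ring
  -- positivity at the point
  have hppos : 0 < p (x, y, u, v) := lt_of_le_of_ne (hp0 _) (Ne.symm hpne)
  have hXYpos : 0 < margXY p x y := by
    refine lt_of_lt_of_le hppos ?_
    calc p (x, y, u, v) ≤ margXYU p x y u :=
          Finset.single_le_sum (f := fun i => p (x, y, u, i)) (fun i _ => hp0 _) (Finset.mem_univ v)
      _ ≤ margXY p x y := by
          rw [hXY_U]
          exact Finset.single_le_sum (fun i _ => hXYUnn x y i) (Finset.mem_univ u)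
  have hUVpos : 0 < margUV p u v := by
    refine lt_of_lt_of_le hppos ?_
    calc p (x, y, u, v) ≤ ∑ b, p (x, b, u, v) :=
          Finset.single_le_sum (f := fun i => p (x, i, u, v)) (fun i _ => hp0 _) (Finset.mem_univ y)
      _ ≤ margUV p u v :=
          Finset.single_le_sum (f := fun a => ∑ b, p (a, b, u, v))
            (fun a _ => Finset.sum_nonneg fun _ _ => hp0 _) (Finset.mem_univ x)
  -- nonvanishing of conditional factors
  have hpe := t2 x y u v
  have hpne' : margXY p x y * (margXU p x u / margX p x) * (margYV p y v / margY p y) ≠ 0 :=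
    hpe ▸ hpne
  have hA : (margXU p x u / margX p x) ≠ 0 := fun h => hpne' (by rw [h]; ring)
  have hB : (margYV p y v / margY p y) ≠ 0 := fun h => hpne' (by rw [h]; ring)
  -- combine with h1
  have key : p (x, y, u, v) * margUV p u v = margXUV p x u v * margYUV p y u v := by
    rw [h1 x y u v hUVpos]
    field_simp
  rw [hpe, hXUV, hYUV] at key
  have final : margXV p x v * margYU p y u *
      ((margXU p x u / margX p x) * (margYV p y v / margY p y)) =
      margXY p x y * margUV p u v *
      ((margXU p x u / margX p x) * (margYV p y v / margY p y)) := by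
    linear_combination -key
  exact mul_right_cancel₀ (mul_ne_zero hA hB) final

end
end

section
/- Fix a positive real ε, an integer n ≥ 1, and probability distributions. If p is a distribution on X×Y×Z such that for some sequence z^n the conditional typical sets factor, i.e. T_ε^n(X|z^n)[p] × T_ε^n(Y|z^n)[p] = T_ε^n(XY|z^n)[p], and this common set is nonempty, and if p' is the Markov-chain distribution p'(x,y,z) = p_Z(z)·p(x|z)·p(y|z) built from the marginals and conditionals of p, then any pair (x^n, y^n) with x^n ∈ T_ε^n(X|z^n)[p] and y^n ∈ T_ε^n(Y|z^n)[p] satisfies (x^n, y^n, z^n) ∈ T_ε^n(XYZ)[p]; consequently if additionally (x^n,y^n,z^n) ∈ T_ε^n(XYZ)[p'], then ||p − p'||₁ < 2ε. -/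
/-!
The first part is the factorization hypothesis read from left to right. For the second, a
sequence triple that is typical for both `p` and `p'` has a single empirical distribution lying
within `ε / (|X||Y||Z|)` of each of them at every point, so `p` and `p'` differ by less than
`2ε / (|X||Y||Z|)` at each of the `|X||Y||Z|` points of the alphabet.
-/

section

variable {X Y Z : Type*} [Fintype X] [Fintype Y] [Fintype Z]
  [DecidableEq X] [DecidableEq Y] [DecidableEq Z]

def cnt2 {n : ℕ} (xn : Fin n → X) (zn : Fin n → Z) (x : X) (z : Z) : ℕ :=
  (Finset.univ.filter fun i => xn i = x ∧ zn i = z).card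

def cnt3 {n : ℕ} (xn : Fin n → X) (yn : Fin n → Y) (zn : Fin n → Z)
    (x : X) (y : Y) (z : Z) : ℕ :=
  (Finset.univ.filter fun i => xn i = x ∧ yn i = y ∧ zn i = z).card

/-- `xn ∈ T_ε^n(X | zn)[p]`: conditional strong typicality of `xn` given `zn`. -/
def condTypX {n : ℕ} (p : X × Y × Z → ℝ) (ε : ℝ) (zn : Fin n → Z) (xn : Fin n → X) : Prop :=
  ∀ x z, |(cnt2 xn zn x z : ℝ) / n - ∑ y, p (x, y, z)|
    < ε / ((Fintype.card X : ℝ) * (Fintype.card Z))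

/-- `yn ∈ T_ε^n(Y | zn)[p]`: conditional strong typicality of `yn` given `zn`. -/
def condTypY {n : ℕ} (p : X × Y × Z → ℝ) (ε : ℝ) (zn : Fin n → Z) (yn : Fin n → Y) : Prop :=
  ∀ y z, |(cnt2 yn zn y z : ℝ) / n - ∑ x, p (x, y, z)|
    < ε / ((Fintype.card Y : ℝ) * (Fintype.card Z))

/-- `(xn, yn, zn) ∈ T_ε^n(XYZ)[p]`: joint strong typicality of the triple.  (The same
condition also defines `(xn, yn) ∈ T_ε^n(XY | zn)[p]`, for the fixed sequence `zn`.) -/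
def typ3 {n : ℕ} (p : X × Y × Z → ℝ) (ε : ℝ)
    (xn : Fin n → X) (yn : Fin n → Y) (zn : Fin n → Z) : Prop :=
  ∀ x y z, |(cnt3 xn yn zn x y z : ℝ) / n - p (x, y, z)|
    < ε / ((Fintype.card X : ℝ) * (Fintype.card Y) * (Fintype.card Z))

theorem Finset.sum_abs_sub_lt_of_forall_abs_sub_lt {α : Type*} [Fintype α] [Nonempty α]
    {f g : α → ℝ} {ε : ℝ} (h : ∀ a, |f a - g a| < ε / Fintype.card α) :
    ∑ a, |f a - g a| < ε := by
  have hcard : (0 : ℝ) < Fintype.card α := by exact_mod_cast Fintype.card_pos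
  calc ∑ a, |f a - g a| < ∑ _a : α, ε / Fintype.card α :=
        Finset.sum_lt_sum_of_nonempty Finset.univ_nonempty fun a _ => h a
    _ = ε := by
        rw [Finset.sum_const, Finset.card_univ, nsmul_eq_mul, mul_div_cancel₀ _ hcard.ne']

theorem typ3.abs_sub_lt {n : ℕ} {p q : X × Y × Z → ℝ} {ε : ℝ}
    {xn : Fin n → X} {yn : Fin n → Y} {zn : Fin n → Z}
    (hp : typ3 p ε xn yn zn) (hq : typ3 q ε xn yn zn) (a : X × Y × Z) :
    |p a - q a| < 2 * ε / Fintype.card (X × Y × Z) := by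
  obtain ⟨x, y, z⟩ := a
  have hpa := hp x y z
  have hqa := hq x y z
  rw [abs_sub_comm] at hpa
  have htri := abs_sub_le (p (x, y, z)) ((cnt3 xn yn zn x y z : ℝ) / n) (q (x, y, z))
  simp only [Fintype.card_prod, Nat.cast_mul, ← mul_assoc, mul_div_assoc] at hpa hqa ⊢
  linarith

theorem reverse_markov_lemma_general
    {n : ℕ} (hn : 1 ≤ n) {ε : ℝ}
    (p p' : X × Y × Z → ℝ)
    (zn : Fin n → Z)
    (hfac : ∀ (xn : Fin n → X) (yn : Fin n → Y),
      (condTypX p ε zn xn ∧ condTypY p ε zn yn) ↔ typ3 p ε xn yn zn) :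
    (∀ (xn : Fin n → X) (yn : Fin n → Y),
      condTypX p ε zn xn → condTypY p ε zn yn → typ3 p ε xn yn zn) ∧
    (∀ (xn : Fin n → X) (yn : Fin n → Y),
      condTypX p ε zn xn → condTypY p ε zn yn → typ3 p' ε xn yn zn →
      ∑ a, |p a - p' a| < 2 * ε) := by
  have htyp : ∀ (xn : Fin n → X) (yn : Fin n → Y),
      condTypX p ε zn xn → condTypY p ε zn yn → typ3 p ε xn yn zn :=
    fun xn yn hx hy => (hfac xn yn).mp ⟨hx, hy⟩
  refine ⟨htyp, fun xn yn hx hy htyp' => ?_⟩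
  have : Nonempty (X × Y × Z) := ⟨(xn ⟨0, hn⟩, yn ⟨0, hn⟩, zn ⟨0, hn⟩)⟩
  exact Finset.sum_abs_sub_lt_of_forall_abs_sub_lt ((htyp xn yn hx hy).abs_sub_lt htyp')

/-- reverse Markov lemma: if for some `zⁿ` the conditional typical sets of `p`
factor, `T_ε^n(X|zⁿ)[p] × T_ε^n(Y|zⁿ)[p] = T_ε^n(XY|zⁿ)[p]`, this set being nonempty, and
`p'(x,y,z) = p_Z(z)·p(x|z)·p(y|z)` is the Markov chain built from `p`, then every pair with
`xⁿ ∈ T_ε^n(X|zⁿ)[p]`, `yⁿ ∈ T_ε^n(Y|zⁿ)[p]` gives `(xⁿ,yⁿ,zⁿ) ∈ T_ε^n(XYZ)[p]`, and if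
additionally `(xⁿ,yⁿ,zⁿ) ∈ T_ε^n(XYZ)[p']`, then `‖p − p'‖₁ < 2ε`. -/
theorem reverse_markov_lemma
    {n : ℕ} (hn : 1 ≤ n) {ε : ℝ} (hε : 0 < ε)
    (p p' : X × Y × Z → ℝ)
    (hp0 : ∀ a, 0 ≤ p a) (hp1 : ∑ a, p a = 1)
    (zn : Fin n → Z)
    (hp' : ∀ x y z, p' (x, y, z) =
      (∑ x', ∑ y', p (x', y', z)) *
        ((∑ y', p (x, y', z)) / (∑ x', ∑ y', p (x', y', z))) *
        ((∑ x', p (x', y, z)) / (∑ x', ∑ y', p (x', y', z))))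
    (hfac : ∀ (xn : Fin n → X) (yn : Fin n → Y),
      (condTypX p ε zn xn ∧ condTypY p ε zn yn) ↔ typ3 p ε xn yn zn)
    (hne : ∃ (xn : Fin n → X) (yn : Fin n → Y), typ3 p ε xn yn zn) :
    (∀ (xn : Fin n → X) (yn : Fin n → Y),
      condTypX p ε zn xn → condTypY p ε zn yn → typ3 p ε xn yn zn) ∧
    (∀ (xn : Fin n → X) (yn : Fin n → Y),
      condTypX p ε zn xn → condTypY p ε zn yn → typ3 p' ε xn yn zn →
      ∑ a, |p a - p' a| < 2 * ε) :=
  reverse_markov_lemma_general hn p p' zn hfac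

end
end
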